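/- arXiv:1708.00220 — 3 statements merged into one kernel-verified Lean document; each statement's English description precedes it below -/
import Mathlib

section
/- Let A be an f-adic ring and let γ : A → Â be the canonical map to its completion. Then: (i) if A₀ is a bounded open subring of A, then the topological closure cl(γ(A₀)) is a bounded open subring of Â; (ii) if B₀ is a bounded open subring of Â, then γ⁻¹(B₀) is a bounded open subring of A. -/
open Filter Topology

/-- A subset `S` of a topological ring is bounded if for every neighbourhood `U` of `0`
there is a neighbourhood `V` of `0` with `V · S ⊆ U`. -/
def IsBoundedSubset {A : Type*} [CommRing A] [TopologicalSpace A] (S : Set A) : Prop :=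
  ∀ U ∈ 𝓝 (0 : A), ∃ V ∈ 𝓝 (0 : A), ∀ v ∈ V, ∀ s ∈ S, v * s ∈ U

/-- An element of a topological ring is power-bounded if the set of its powers `aⁿ`, `n ≥ 1`,
is bounded. -/
def IsPowerBounded {A : Type*} [CommRing A] [TopologicalSpace A] (a : A) : Prop :=
  IsBoundedSubset {x : A | ∃ n : ℕ, 1 ≤ n ∧ x = a ^ n}

/-- `A°`, the set of power-bounded elements of a topological ring. -/
def powerBounded (A : Type*) [CommRing A] [TopologicalSpace A] : Set A :=
  {a : A | IsPowerBounded a}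

/-- `I₀` is an ideal of definition of the subring `A₀` of the topological ring `A` if it is
finitely generated and its powers form a basis of neighbourhoods of `0` in `A`. -/
def IsIdealOfDefinition {A : Type*} [CommRing A] [TopologicalSpace A]
    (A₀ : Subring A) (I₀ : Ideal A₀) : Prop :=
  I₀.FG ∧ (𝓝 (0 : A)).HasBasis (fun n : ℕ => 1 ≤ n)
    (fun n => ⇑A₀.subtype '' ((I₀ ^ n : Ideal A₀) : Set A₀))

/-- A ring of definition of a topological ring is an open subring admitting an ideal of
definition. -/
def IsRingOfDefinition {A : Type*} [CommRing A] [TopologicalSpace A] (A₀ : Subring A) : Prop :=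
  IsOpen (A₀ : Set A) ∧ ∃ I₀ : Ideal A₀, IsIdealOfDefinition A₀ I₀

/-- A topological commutative ring is f-adic if it admits a ring of definition. -/
def IsFAdic (A : Type*) [CommRing A] [TopologicalSpace A] : Prop :=
  ∃ A₀ : Subring A, IsRingOfDefinition A₀

/-- A subring `S` of `A` is integrally closed in `A` if every element of `A` integral
over `S` lies in `S`. -/
def IsIntegrallyClosedSubring {A : Type*} [CommRing A] (S : Subring A) : Prop :=
  ∀ x : A, IsIntegral S x → x ∈ S

/- The closure of `γ(A₀)` is open because it is the closure of a subgroup containing a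
neighbourhood of `0` (density of `γ`), and bounded because multiplication is continuous and
closed neighbourhoods of `0` form a basis. The preimage `γ⁻¹(B₀)` is open by continuity and
bounded because `A` carries the topology induced by `γ`. -/

theorem IsDenseInducing.isOpen_closure_image_addSubgroup {G H : Type*} [AddGroup G]
    [TopologicalSpace G] [AddGroup H] [TopologicalSpace H] [IsTopologicalAddGroup H]
    {f : G →+ H} (hf : IsDenseInducing f) {G₀ : AddSubgroup G} (hG₀ : IsOpen (G₀ : Set G)) :
    IsOpen (closure (f '' G₀)) := by
  have hnhds : closure (f '' G₀) ∈ 𝓝 (0 : H) := by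
    simpa only [map_zero] using hf.closure_image_mem_nhds (hG₀.mem_nhds G₀.zero_mem)
  exact AddSubgroup.isOpen_of_mem_nhds (G₀.map f).topologicalClosure hnhds

section BoundedTransfer

variable {A B : Type*} [CommRing A] [TopologicalSpace A] [CommRing B] [TopologicalSpace B]
  {f : A →+* B}

theorem IsBoundedSubset.closure_image_of_isDenseInducing [IsTopologicalRing B]
    (hf : IsDenseInducing f) {S : Set A} (hS : IsBoundedSubset S) : IsBoundedSubset (closure (f '' S)) := by
  intro U hU
  obtain ⟨W, ⟨hW, hW_closed⟩, hWU⟩ := (closed_nhds_basis (0 : B)).mem_iff.1 hU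
  have hfW : f ⁻¹' W ∈ 𝓝 (0 : A) :=
    hf.continuous.continuousAt.preimage_mem_nhds (by rwa [map_zero])
  obtain ⟨V, hV, hVS⟩ := hS _ hfW
  refine ⟨closure (f '' V), by simpa only [map_zero] using hf.closure_image_mem_nhds hV, ?_⟩
  intro v hv s hs
  refine hWU (hW_closed.closure_subset ?_)
  refine map_mem_closure₂ continuous_mul hv hs ?_
  rintro _ ⟨x, hx, rfl⟩ _ ⟨y, hy, rfl⟩
  rw [← map_mul]
  exact hVS x hx y hy

theorem IsBoundedSubset.preimage_of_isInducing (hf : IsInducing f) {S : Set B}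
    (hS : IsBoundedSubset S) : IsBoundedSubset (f ⁻¹' S) := by
  intro U hU
  rw [hf.nhds_eq_comap, map_zero] at hU
  obtain ⟨U', hU', hU'U⟩ := hU
  obtain ⟨V', hV', hV'S⟩ := hS _ hU'
  refine ⟨f ⁻¹' V', hf.continuous.continuousAt.preimage_mem_nhds (by rwa [map_zero]), ?_⟩
  intro v hv s hs
  apply hU'U
  simpa only [Set.mem_preimage, map_mul] using hV'S _ hv _ hs

end BoundedTransfer

theorem statement7_general {A : Type*} [CommRing A] [UniformSpace A] [IsUniformAddGroup A]
    [IsTopologicalRing A]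
    (γ : A →+* UniformSpace.Completion A)
    (hγ : γ = UniformSpace.Completion.coeRingHom) :
    (∀ A₀ : Subring A, IsOpen (A₀ : Set A) → IsBoundedSubset (A₀ : Set A) →
      IsOpen (closure (⇑γ '' (A₀ : Set A))) ∧
      IsBoundedSubset (closure (⇑γ '' (A₀ : Set A)))) ∧
    (∀ B₀ : Subring (UniformSpace.Completion A),
      IsOpen (B₀ : Set (UniformSpace.Completion A)) →
      IsBoundedSubset (B₀ : Set (UniformSpace.Completion A)) →
      IsOpen ((B₀.comap γ : Subring A) : Set A) ∧
      IsBoundedSubset ((B₀.comap γ : Subring A) : Set A)) := by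
  have hγ_dense : IsDenseInducing γ := hγ ▸ UniformSpace.Completion.isDenseInducing_coe
  refine ⟨fun A₀ hA₀_open hA₀_bdd => ⟨?_, ?_⟩, fun B₀ hB₀_open hB₀_bdd => ⟨?_, ?_⟩⟩
  · exact IsDenseInducing.isOpen_closure_image_addSubgroup (f := γ.toAddMonoidHom) hγ_dense
      (G₀ := A₀.toAddSubgroup) hA₀_open
  · exact hA₀_bdd.closure_image_of_isDenseInducing hγ_dense
  · exact hB₀_open.preimage hγ_dense.continuous
  · exact hB₀_bdd.preimage_of_isInducing hγ_dense.isInducing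

theorem statement7 {A : Type*} [CommRing A] [UniformSpace A] [IsUniformAddGroup A]
    [IsTopologicalRing A] (hA : IsFAdic A)
    (γ : A →+* UniformSpace.Completion A)
    (hγ : γ = UniformSpace.Completion.coeRingHom) :
    (∀ A₀ : Subring A, IsOpen (A₀ : Set A) → IsBoundedSubset (A₀ : Set A) →
      IsOpen (closure (⇑γ '' (A₀ : Set A))) ∧
      IsBoundedSubset (closure (⇑γ '' (A₀ : Set A)))) ∧
    (∀ B₀ : Subring (UniformSpace.Completion A),
      IsOpen (B₀ : Set (UniformSpace.Completion A)) →
      IsBoundedSubset (B₀ : Set (UniformSpace.Completion A)) →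
      IsOpen ((B₀.comap γ : Subring A) : Set A) ∧
      IsBoundedSubset ((B₀.comap γ : Subring A) : Set A)) :=
  statement7_general γ hγ
end

section
/- Let A be an f-adic ring and let γ : A → Â be the canonical map to its completion. If A⁺ is an open subring of A contained in A° and integrally closed in A, then cl(γ(A⁺)), the topological closure of γ(A⁺) in Â, is an open subring of Â contained in (Â)° and integrally closed in Â. -/
open Filter Topology

/-!
An f-adic ring `A` is nonarchimedean and its ring of definition `A₀` is open and bounded; by
density the same holds for `Â` and `cl(γ A₀)`. In a nonarchimedean ring the power-bounded
elements form an additive subgroup (binomial expansion), which is open once it contains an open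
bounded subring, hence closed; as `γ` preserves power-boundedness, it contains `cl(γ A⁺)`.
For integral closedness, approximate a root `x ∈ Â` of a monic polynomial over `cl(γ A⁺)` by
some `γ y`, and its coefficients by elements of `γ A⁺`: then `y` satisfies a monic equation over
`A⁺` up to an error in `γ⁻¹(cl(γ A⁺)) = A⁺`, so `y ∈ A⁺`.
-/

open Polynomial Pointwise

section Bounded

variable {R : Type*} [CommRing R] [TopologicalSpace R]

lemma IsBoundedSubset.mono {S T : Set R} (hT : IsBoundedSubset T) (hST : S ⊆ T) :
    IsBoundedSubset S :=
  fun U hU => (hT U hU).imp fun _ ⟨hV, hVT⟩ => ⟨hV, fun v hv s hs => hVT v hv s (hST hs)⟩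

lemma IsBoundedSubset.mul {S T : Set R} (hS : IsBoundedSubset S) (hT : IsBoundedSubset T) :
    IsBoundedSubset (S * T) := by
  intro U hU
  obtain ⟨V', hV', hV'T⟩ := hT U hU
  obtain ⟨V, hV, hVS⟩ := hS V' hV'
  refine ⟨V, hV, ?_⟩
  rintro v hv _ ⟨s, hs, t, ht, rfl⟩
  simpa only [mul_assoc] using hV'T _ (hVS v hv s hs) t ht

lemma isPowerBounded_iff_isBoundedSubset_range {a : R} :
    IsPowerBounded a ↔ IsBoundedSubset (Set.range (a ^ ·)) := by
  refine ⟨fun ha U hU => ?_, fun ha => ha.mono ?_⟩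
  · obtain ⟨V, hV, hVa⟩ := ha U hU
    refine ⟨V ∩ U, inter_mem hV hU, ?_⟩
    rintro v ⟨hvV, hvU⟩ _ ⟨_ | n, rfl⟩
    · simpa using hvU
    · exact hVa v hvV _ ⟨n + 1, n.succ_pos, rfl⟩
  · rintro _ ⟨n, -, rfl⟩
    exact ⟨n, rfl⟩

lemma isPowerBounded_zero : IsPowerBounded (0 : R) := by
  intro U hU
  refine ⟨Set.univ, univ_mem, ?_⟩
  rintro v - _ ⟨n, hn, rfl⟩
  simpa [zero_pow (Nat.one_le_iff_ne_zero.mp hn)] using mem_of_mem_nhds hU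

lemma isPowerBounded_of_mem {B : Subring R} (hB : IsBoundedSubset (B : Set R)) {a : R}
    (ha : a ∈ B) : IsPowerBounded a :=
  hB.mono <| by
    rintro _ ⟨n, -, rfl⟩
    exact pow_mem ha n

end Bounded

section Nonarchimedean

variable {R : Type*} [CommRing R] [TopologicalSpace R] [NonarchimedeanRing R]

lemma IsBoundedSubset.addSubgroupClosure {S : Set R} (hS : IsBoundedSubset S) :
    IsBoundedSubset (AddSubgroup.closure S : Set R) := by
  intro U hU
  obtain ⟨G, hGU⟩ := NonarchimedeanRing.is_nonarchimedean U hU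
  obtain ⟨V, hV, hVS⟩ := hS G G.mem_nhds_zero
  refine ⟨V, hV, fun v hv x hx => hGU ?_⟩
  exact (AddSubgroup.closure_le (K := G.toAddSubgroup.comap (AddMonoidHom.mulLeft v))).2
    (fun s hs => hVS v hv s hs) hx

lemma IsPowerBounded.add {a b : R} (ha : IsPowerBounded a) (hb : IsPowerBounded b) :
    IsPowerBounded (a + b) := by
  rw [isPowerBounded_iff_isBoundedSubset_range] at *
  refine (ha.mul hb).addSubgroupClosure.mono ?_
  rintro _ ⟨n, rfl⟩
  simp only [add_pow]
  refine AddSubgroup.sum_mem _ fun m _ => ?_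
  rw [← nsmul_eq_mul']
  exact AddSubgroup.nsmul_mem _ (AddSubgroup.subset_closure
    (Set.mul_mem_mul (Set.mem_range_self m) (Set.mem_range_self (n - m)))) _

lemma IsPowerBounded.neg {a : R} (ha : IsPowerBounded a) : IsPowerBounded (-a) := by
  rw [isPowerBounded_iff_isBoundedSubset_range] at *
  refine ha.addSubgroupClosure.mono ?_
  rintro _ ⟨n, rfl⟩
  rw [SetLike.mem_coe]
  have han : a ^ n ∈ AddSubgroup.closure (Set.range (a ^ ·)) :=
    AddSubgroup.subset_closure ⟨n, rfl⟩
  rcases n.even_or_odd with hn | hn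
  · simpa only [hn.neg_pow] using han
  · simpa only [hn.neg_pow] using neg_mem han

variable (R) in
def powerBoundedAddSubgroup : AddSubgroup R where
  carrier := powerBounded R
  add_mem' := IsPowerBounded.add
  zero_mem' := isPowerBounded_zero
  neg_mem' := IsPowerBounded.neg

lemma isClosed_powerBounded {B : Subring R} (hB : (B : Set R) ∈ 𝓝 0)
    (hBb : IsBoundedSubset (B : Set R)) : IsClosed (powerBounded R) :=
  AddSubgroup.isClosed_of_isOpen (powerBoundedAddSubgroup R) <|
    AddSubgroup.isOpen_of_mem_nhds _ <| mem_of_superset hB fun _ hb => isPowerBounded_of_mem hBb hb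

end Nonarchimedean

section FAdic

variable {A : Type*} [CommRing A] [TopologicalSpace A] {A₀ : Subring A} {I₀ : Ideal A₀}

lemma IsIdealOfDefinition.isBoundedSubset (h : IsIdealOfDefinition A₀ I₀) :
    IsBoundedSubset (A₀ : Set A) := by
  intro U hU
  obtain ⟨n, hn, hnU⟩ := h.2.mem_iff.1 hU
  refine ⟨_, h.2.mem_of_mem hn, ?_⟩
  rintro _ ⟨v, hv, rfl⟩ s hs
  exact hnU ⟨v * ⟨s, hs⟩, Ideal.mul_mem_right _ _ hv, rfl⟩

lemma IsIdealOfDefinition.nonarchimedeanRing [IsTopologicalRing A]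
    (h : IsIdealOfDefinition A₀ I₀) : NonarchimedeanRing A where
  is_nonarchimedean U hU := by
    obtain ⟨n, hn, hnU⟩ := h.2.mem_iff.1 hU
    let G : AddSubgroup A := (I₀ ^ n).toAddSubgroup.map A₀.subtype.toAddMonoidHom
    exact ⟨⟨G, G.isOpen_of_mem_nhds (h.2.mem_of_mem hn)⟩, hnU⟩

end FAdic

lemma Subring.isIntegral_of_pow_add_sum_mem {A : Type*} [CommRing A] {S : Subring A} {n : ℕ}
    (hn : 0 < n) (a : Fin n → S) {y : A} (hy : y ^ n + ∑ i, (a i : A) * y ^ (i : ℕ) ∈ S) :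
    IsIntegral S y := by
  nontriviality A
  have hdeg : (∑ i, C (a i) * X ^ (i : ℕ)).degree < (n : WithBot ℕ) := degree_sum_fin_lt a
  have hdeg' : (X ^ n + ∑ i, C (a i) * X ^ (i : ℕ)).degree = n := by
    rw [degree_add_eq_left_of_degree_lt (by rwa [degree_X_pow]), degree_X_pow]
  refine ⟨X ^ n + ∑ i, C (a i) * X ^ (i : ℕ) - C ⟨_, hy⟩,
    (monic_X_pow_add hdeg).sub_of_left ?_, ?_⟩
  · rw [hdeg']
    exact degree_C_le.trans_lt (by exact_mod_cast hn)
  · simp only [eval₂_sub, eval₂_add, eval₂_X_pow, eval₂_finsetSum, eval₂_mul, eval₂_C,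
      sub_eq_zero]
    rfl

section DenseInducing

variable {A R : Type*} [CommRing A] [TopologicalSpace A] [CommRing R] [TopologicalSpace R]
  [IsTopologicalRing R] {f : A →+* R}

lemma IsDenseInducing.topologicalClosure_map_mem_nhds (hf : IsDenseInducing f) {S : Subring A}
    (hS : IsOpen (S : Set A)) :
    ((S.map f).topologicalClosure : Set R) ∈ 𝓝 0 := by
  have h := hf.closure_image_mem_nhds (hS.mem_nhds S.zero_mem)
  rwa [map_zero] at h

lemma IsDenseInducing.isOpen_topologicalClosure_map (hf : IsDenseInducing f) {S : Subring A}
    (hS : IsOpen (S : Set A)) :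
    IsOpen ((S.map f).topologicalClosure : Set R) :=
  AddSubgroup.isOpen_of_mem_nhds (S.map f).topologicalClosure.toAddSubgroup
    (hf.topologicalClosure_map_mem_nhds hS)

lemma IsDenseInducing.preimage_topologicalClosure_map [IsTopologicalAddGroup A]
    (hf : IsDenseInducing f) {S : Subring A} (hS : IsOpen (S : Set A)) :
    f ⁻¹' (S.map f).topologicalClosure = S := by
  have hSc : IsClosed (S : Set A) := AddSubgroup.isClosed_of_isOpen S.toAddSubgroup hS
  change f ⁻¹' closure (f '' S) = S
  rw [← hf.isInducing.closure_eq_preimage_closure_image, hSc.closure_eq]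

lemma IsDenseInducing.isBoundedSubset_closure_image [RegularSpace R] (hf : IsDenseInducing f)
    {S : Set A} (hS : IsBoundedSubset S) : IsBoundedSubset (closure (f '' S)) := by
  intro U hU
  obtain ⟨C, ⟨hC, hCc⟩, hCU⟩ := (closed_nhds_basis (0 : R)).mem_iff.1 hU
  obtain ⟨V, hV, hVS⟩ :=
    hS _ (hf.continuous.continuousAt.preimage_mem_nhds (by rwa [map_zero]) : f ⁻¹' C ∈ 𝓝 0)
  refine ⟨closure (f '' V), by simpa using hf.closure_image_mem_nhds hV, fun v hv s hs => ?_⟩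
  refine hCU (hCc.closure_subset (map_mem_closure₂ continuous_mul hv hs ?_))
  rintro _ ⟨v, hv, rfl⟩ _ ⟨s, hs, rfl⟩
  rw [← map_mul]
  exact hVS v hv s hs

lemma IsDenseInducing.isPowerBounded_apply [RegularSpace R] (hf : IsDenseInducing f) {a : A}
    (ha : IsPowerBounded a) : IsPowerBounded (f a) :=
  (hf.isBoundedSubset_closure_image ha).mono <| by
    rintro _ ⟨n, hn, rfl⟩
    exact subset_closure ⟨a ^ n, ⟨n, hn, rfl⟩, map_pow f a n⟩

lemma IsDenseInducing.isIntegrallyClosedSubring_topologicalClosure_map [IsTopologicalAddGroup A]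
    (hf : IsDenseInducing f) {S : Subring A} (hS : IsOpen (S : Set A))
    (hic : IsIntegrallyClosedSubring S) :
    IsIntegrallyClosedSubring (S.map f).topologicalClosure := by
  set B := (S.map f).topologicalClosure
  have hB : IsOpen (B : Set R) := hf.isOpen_topologicalClosure_map hS
  rintro x ⟨p, hpm, hpx⟩
  nontriviality R
  set n := p.natDegree
  have hn : 0 < n := hpm.natDegree_pos.2 fun hp1 => by simp [hp1] at hpx
  refine mem_closure_iff_nhds.2 fun N hN => ?_
  obtain ⟨_, ⟨hyN, hyB⟩, y, rfl⟩ := mem_closure_iff_nhds.1 (hf.dense x)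
    (N ∩ (fun u => p.eval₂ (algebraMap B R) u) ⁻¹' B)
    (inter_mem hN ((hB.preimage (p.continuous_eval₂ _)).mem_nhds (by simp [hpx])))
  -- `y` is chosen first, so that each coefficient error can be made small against `f y ^ i`.
  have happrox (i : Fin n) : ∃ a ∈ S, (f a - p.coeff i) * f y ^ (i : ℕ) ∈ B := by
    obtain ⟨_, hmem, a, ha, rfl⟩ := mem_closure_iff_nhds.1 (p.coeff i).2
      ((fun u => (u - p.coeff i) * f y ^ (i : ℕ)) ⁻¹' B)
      ((hB.preimage (by fun_prop)).mem_nhds (by simp))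
    exact ⟨a, ha, hmem⟩
  choose a haS ha using happrox
  have hz : f (y ^ n + ∑ i, a i * y ^ (i : ℕ)) =
      p.eval₂ (algebraMap B R) (f y) + ∑ i, (f (a i) - p.coeff i) * f y ^ (i : ℕ) := by
    rw [eval₂_eq_sum_range, Finset.sum_range_succ, hpm.coeff_natDegree,
      ← Fin.sum_univ_eq_sum_range (fun i => algebraMap B R (p.coeff i) * f y ^ i)]
    simp only [map_add, map_pow, map_sum, map_mul, map_one, one_mul, sub_mul,
      Finset.sum_sub_distrib]
    change _ = ∑ i : Fin n, (p.coeff i : R) * f y ^ (i : ℕ) + f y ^ n + _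
    ring
  have hyS : y ∈ S :=
    hic y <| Subring.isIntegral_of_pow_add_sum_mem hn (fun i => ⟨a i, haS i⟩) <| by
      rw [← SetLike.mem_coe, ← hf.preimage_topologicalClosure_map hS, Set.mem_preimage, hz]
      exact add_mem hyB (sum_mem fun i _ => ha i)
  exact ⟨f y, hyN, y, hyS, rfl⟩

end DenseInducing

theorem statement11 {A : Type*} [CommRing A] [UniformSpace A] [IsUniformAddGroup A]
    [IsTopologicalRing A] (hA : IsFAdic A)
    (γ : A →+* UniformSpace.Completion A)
    (hγ : γ = UniformSpace.Completion.coeRingHom)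
    (Aplus : Subring A) (hopen : IsOpen (Aplus : Set A))
    (hpb : (Aplus : Set A) ⊆ powerBounded A)
    (hic : IsIntegrallyClosedSubring Aplus) :
    IsOpen (((Aplus.map γ).topologicalClosure : Subring (UniformSpace.Completion A)) :
        Set (UniformSpace.Completion A)) ∧
    (((Aplus.map γ).topologicalClosure : Subring (UniformSpace.Completion A)) :
        Set (UniformSpace.Completion A)) ⊆ powerBounded (UniformSpace.Completion A) ∧
    IsIntegrallyClosedSubring (Aplus.map γ).topologicalClosure := by
  obtain ⟨A₀, hA₀, I₀, hI₀⟩ := hA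
  have := hI₀.nonarchimedeanRing
  subst hγ
  have hγ : IsDenseInducing (UniformSpace.Completion.coeRingHom : A →+* _) :=
    UniformSpace.Completion.isDenseInducing_coe
  refine ⟨hγ.isOpen_topologicalClosure_map hopen, ?_,
    hγ.isIntegrallyClosedSubring_topologicalClosure_map hopen hic⟩
  have hclosed : IsClosed (powerBounded (UniformSpace.Completion A)) :=
    isClosed_powerBounded (B := (A₀.map _).topologicalClosure)
      (hγ.topologicalClosure_map_mem_nhds hA₀)
      (hγ.isBoundedSubset_closure_image hI₀.isBoundedSubset)
  exact closure_minimal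
    (Set.image_subset_iff.2 fun a ha => hγ.isPowerBounded_apply (hpb ha)) hclosed
end

section
/- Let A be an f-adic ring and let γ : A → Â be the canonical map to its completion. If B⁺ is an open subring of Â contained in (Â)° and integrally closed in Â, then γ⁻¹(B⁺) is an open subring of A contained in A° and integrally closed in A. -/
open Filter Topology

/-! The three properties pull back along any inducing ring homomorphism such as `A → Â`:
openness by continuity, boundedness because every neighbourhood of `0` in `A` is the preimage of
one in `Â`, and integral closedness because an integral equation of `x` over `γ⁻¹(B⁺)` maps to
one of `γ x` over `B⁺`. -/

section Comap

variable {A B : Type*} [CommRing A] [CommRing B]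

theorem IsBoundedSubset.of_image [TopologicalSpace A] [TopologicalSpace B] {f : A →+* B}
    (hf : IsInducing f) {S : Set A} (hS : IsBoundedSubset (f '' S)) : IsBoundedSubset S := by
  intro U hU
  rw [hf.nhds_eq_comap, map_zero] at hU
  obtain ⟨U', hU', hU'U⟩ := hU
  obtain ⟨V', hV', hV'U'⟩ := hS U' hU'
  refine ⟨f ⁻¹' V', hf.continuous.continuousAt.preimage_mem_nhds (by rwa [map_zero]), ?_⟩
  intro v hv s hs
  apply hU'U
  simpa only [Set.mem_preimage, map_mul] using hV'U' _ hv _ (Set.mem_image_of_mem f hs)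

theorem IsPowerBounded.of_map [TopologicalSpace A] [TopologicalSpace B] {f : A →+* B}
    (hf : IsInducing f) {a : A} (ha : IsPowerBounded (f a)) : IsPowerBounded a := by
  refine IsBoundedSubset.of_image hf (fun U hU => ?_)
  obtain ⟨V, hV, hVU⟩ := ha U hU
  refine ⟨V, hV, ?_⟩
  rintro v hv _ ⟨_, ⟨n, hn, rfl⟩, rfl⟩
  exact hVU v hv _ ⟨n, hn, map_pow f a n⟩

theorem IsIntegrallyClosedSubring.comap {S : Subring B} (hS : IsIntegrallyClosedSubring S)
    (f : A →+* B) : IsIntegrallyClosedSubring (S.comap f) := fun x hx =>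
  hS (f x) <| hx.map_of_comp_eq ((f.comp (S.comap f).subtype).codRestrict S fun y => y.2) f rfl

end Comap

theorem statement12_general {A : Type*} [CommRing A] [UniformSpace A] [IsUniformAddGroup A]
    [IsTopologicalRing A]
    (γ : A →+* UniformSpace.Completion A)
    (hγ : γ = UniformSpace.Completion.coeRingHom)
    (Bplus : Subring (UniformSpace.Completion A))
    (hopen : IsOpen (Bplus : Set (UniformSpace.Completion A)))
    (hpb : (Bplus : Set (UniformSpace.Completion A)) ⊆
      powerBounded (UniformSpace.Completion A))
    (hic : IsIntegrallyClosedSubring Bplus) :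
    IsOpen ((Bplus.comap γ : Subring A) : Set A) ∧
    ((Bplus.comap γ : Subring A) : Set A) ⊆ powerBounded A ∧
    IsIntegrallyClosedSubring (Bplus.comap γ) := by
  have hind : IsInducing γ := hγ ▸ (UniformSpace.Completion.isUniformInducing_coe A).isInducing
  exact ⟨hopen.preimage hind.continuous, fun a ha => (hpb ha).of_map hind, hic.comap γ⟩

theorem statement12 {A : Type*} [CommRing A] [UniformSpace A] [IsUniformAddGroup A]
    [IsTopologicalRing A] (hA : IsFAdic A)
    (γ : A →+* UniformSpace.Completion A)
    (hγ : γ = UniformSpace.Completion.coeRingHom)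
    (Bplus : Subring (UniformSpace.Completion A))
    (hopen : IsOpen (Bplus : Set (UniformSpace.Completion A)))
    (hpb : (Bplus : Set (UniformSpace.Completion A)) ⊆
      powerBounded (UniformSpace.Completion A))
    (hic : IsIntegrallyClosedSubring Bplus) :
    IsOpen ((Bplus.comap γ : Subring A) : Set A) ∧
    ((Bplus.comap γ : Subring A) : Set A) ⊆ powerBounded A ∧
    IsIntegrallyClosedSubring (Bplus.comap γ) :=
  statement12_general γ hγ Bplus hopen hpb hic
end
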